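/- arXiv:0803.3730 — 2 statements merged into one kernel-verified Lean document; each statement's English description precedes it below -/
import Mathlib

section
/- Let R be a discrete valuation ring with uniformizer π and fraction field K. Let A be a commutative R-algebra that is semireflexive as an R-module, and let B be a commutative A-algebra that is flat as an R-module and finitely generated as an A-module. If K ⊗_R B is semireflexive as a module over K ⊗_R A, then B is semireflexive as an R-module. -/
/-- An `S`-module `M` is semireflexive if the canonical evaluation map from `M` to its
double dual is injective. -/
def Semireflexive (S : Type*) (M : Type*) [CommRing S] [AddCommGroup M] [Module S M] : Prop :=
  Function.Injective (Module.Dual.eval S M)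

/-!
Semireflexive modules and flat modules over `R` are torsion-free, so `A` and `B` embed into
`K ⊗[R] A` and `K ⊗[R] B`. Suppose every `R`-linear functional on `B` kills `b`, and let `φ` be a
`K ⊗[R] A`-linear functional on `K ⊗[R] B`. As `B` is a finite `A`-module, a single
nonzerodivisor `s` of `R` clears the denominators of `b' ↦ φ (1 ⊗ b')`, which yields an `R`-linear
`ψ : B → A` with `1 ⊗ ψ b' = s • φ (1 ⊗ b')`. Composing `ψ` with functionals on `A` and using
that `A` is semireflexive gives `ψ b = 0`, hence `φ (1 ⊗ b) = 0`. Semireflexivity of `K ⊗[R] B`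
then forces `1 ⊗ b = 0`, i.e. `b = 0`.
-/

open TensorProduct nonZeroDivisors

section

variable {R M : Type*} [CommRing R] [AddCommGroup M] [Module R M]

theorem semireflexive_iff :
    Semireflexive R M ↔ ∀ m : M, (∀ f : Module.Dual R M, f m = 0) → m = 0 := by
  simp only [Semireflexive, injective_iff_map_eq_zero, LinearMap.ext_iff,
    Module.Dual.eval_apply, LinearMap.zero_apply]

theorem Semireflexive.isSMulRegular (hM : Semireflexive R M) {r : R} (hr : r ∈ R⁰) :
    IsSMulRegular M r := by
  refine IsSMulRegular.of_right_eq_zero_of_smul fun m hm ↦ semireflexive_iff.mp hM m fun f ↦ ?_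
  rw [← mul_left_mem_nonZeroDivisors_eq_zero_iff hr, ← smul_eq_mul, ← map_smul, hm, map_zero]

end

section

variable {R A L M : Type*} [CommRing R] [CommRing A] [Algebra R A] [CommRing L] [Algebra R L]
  [AddCommGroup M] [Module A M] [Module R M] [Module.Finite A M]
  {S : Submonoid R} (ι : A →ₐ[R] L) [IsLocalizedModule S ι.toLinearMap]

theorem exists_smul_mem_range_of_finite (χ : M →ₗ[R] L)
    (hχ : ∀ (a : A) (m : M), χ (a • m) = ι a * χ m) :
    ∃ s : S, ∀ m, (s : R) • χ m ∈ LinearMap.range ι.toLinearMap := by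
  obtain ⟨t, ht⟩ := Module.Finite.fg_top (R := A) (M := M)
  obtain ⟨s, hs⟩ := IsLocalizedModule.exist_integer_multiples S ι.toLinearMap t χ
  refine ⟨s, fun m ↦ ?_⟩
  induction (ht ▸ Submodule.mem_top : m ∈ Submodule.span A t) using Submodule.span_induction with
  | mem m hm => exact hs m hm
  | zero => simp
  | add m m' _ _ hm hm' => simpa only [map_add, smul_add] using add_mem hm hm'
  | smul a m _ hm =>
    obtain ⟨c, hc⟩ := hm
    refine ⟨a * c, ?_⟩
    rw [hχ, ← mul_smul_comm, ← hc]
    simp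

theorem exists_lift_smul_of_finite (hι : Function.Injective ι) (χ : M →ₗ[R] L)
    (hχ : ∀ (a : A) (m : M), χ (a • m) = ι a * χ m) :
    ∃ (ψ : M →ₗ[R] A) (s : S), ∀ m, ι (ψ m) = (s : R) • χ m := by
  obtain ⟨s, hs⟩ := exists_smul_mem_range_of_finite (S := S) ι χ hχ
  let e := LinearEquiv.ofInjective ι.toLinearMap hι
  refine ⟨e.symm.toLinearMap ∘ₗ ((s : R) • χ).codRestrict _ hs, s, fun m ↦ ?_⟩
  exact congrArg Subtype.val (e.apply_symm_apply ⟨_, hs m⟩)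

end

theorem Semireflexive.of_injective_of_isLocalizedModule {R A L M N : Type*} [CommRing R]
    [CommRing A] [Algebra R A] [CommRing L] [Algebra R L] [AddCommGroup M] [Module A M]
    [Module R M] [Module.Finite A M] [AddCommGroup N] [Module R N] [Module L N]
    [IsScalarTower R L N] (S : Submonoid R) (hA : Semireflexive R A) (ι : A →ₐ[R] L)
    (hι : Function.Injective ι) [IsLocalizedModule S ι.toLinearMap] (hN : Semireflexive L N)
    (j : M →ₗ[R] N) (hj : Function.Injective j)
    (hjA : ∀ (a : A) (m : M), j (a • m) = ι a • j m) : Semireflexive R M := by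
  rw [semireflexive_iff] at hA hN ⊢
  refine fun m hm ↦ hj <| (map_zero j).symm ▸ hN (j m) fun φ ↦ ?_
  obtain ⟨ψ, s, hψ⟩ := exists_lift_smul_of_finite (S := S) ι hι (φ.restrictScalars R ∘ₗ j)
    fun a m ↦ by simp [hjA, smul_eq_mul]
  have hψm : ψ m = 0 := hA _ fun f ↦ hm (f ∘ₗ ψ)
  have hsφ : (s : R) • φ (j m) = 0 := by simpa [hψm] using (hψ m).symm
  exact IsLocalizedModule.smul_injective ι.toLinearMap s (by simpa [Submonoid.smul_def] using hsφ)

theorem stmt3_general (R : Type*) [CommRing R]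
    (K : Type*) [Field K] [Algebra R K] [IsFractionRing R K]
    (A : Type*) [CommRing A] [Algebra R A]
    (B : Type*) [CommRing B] [Algebra A B] [Algebra R B] [IsScalarTower R A B]
    (hA : Semireflexive R A)
    (hBflat : Module.Flat R B)
    (hBfin : Module.Finite A B)
    (hKB : @Semireflexive (K ⊗[R] A) (K ⊗[R] B) inferInstance inferInstance
      (Module.compHom (K ⊗[R] B)
        (Algebra.TensorProduct.map (AlgHom.id R K)
          (IsScalarTower.toAlgHom R A B)).toRingHom)) :
    Semireflexive R B := by
  let g := Algebra.TensorProduct.map (AlgHom.id R K) (IsScalarTower.toAlgHom R A B)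
  let : Module (K ⊗[R] A) (K ⊗[R] B) := Module.compHom (K ⊗[R] B) g.toRingHom
  have : IsScalarTower R (K ⊗[R] A) (K ⊗[R] B) :=
    ⟨fun r x y ↦ show g (r • x) * y = r • (g x * y) by rw [map_smul, smul_mul_assoc]⟩
  let ι : A →ₐ[R] K ⊗[R] A := Algebra.TensorProduct.includeRight
  have : IsLocalizedModule R⁰ ι.toLinearMap :=
    inferInstanceAs (IsLocalizedModule R⁰ (TensorProduct.mk R K A 1))
  have hι : Function.Injective ι :=
    (IsLocalizedModule.injective_iff_isRegular R⁰ (TensorProduct.mk R K A 1)).mpr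
      fun c ↦ hA.isSMulRegular c.2
  have hj : Function.Injective (TensorProduct.mk R K B 1) :=
    (IsLocalizedModule.injective_iff_isRegular R⁰ _).mpr
      fun c ↦ Module.Flat.isSMulRegular_of_nonZeroDivisors c.2
  refine hA.of_injective_of_isLocalizedModule R⁰ _ hι hKB _ hj fun a b ↦ ?_
  show (1 : K) ⊗ₜ (a • b) = g (1 ⊗ₜ a) * (1 ⊗ₜ b)
  simp [g, Algebra.smul_def]

open TensorProduct in
/-- Let `R` be a discrete valuation ring with uniformizer `π` and fraction field `K`.
Let `A` be a commutative `R`-algebra that is semireflexive as an `R`-module, and let `B` be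
a commutative `A`-algebra that is flat as an `R`-module and finitely generated as an
`A`-module.  If `K ⊗[R] B` is semireflexive as a module over `K ⊗[R] A` (via the base change
`K ⊗[R] A → K ⊗[R] B` of `A → B`), then `B` is semireflexive as an `R`-module. -/
theorem stmt3 (R : Type*) [CommRing R] [IsDomain R] [IsDiscreteValuationRing R]
    (π : R) (hπ : Irreducible π)
    (K : Type*) [Field K] [Algebra R K] [IsFractionRing R K]
    (A : Type*) [CommRing A] [Algebra R A]
    (B : Type*) [CommRing B] [Algebra A B] [Algebra R B] [IsScalarTower R A B]
    (hA : Semireflexive R A)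
    (hBflat : Module.Flat R B)
    (hBfin : Module.Finite A B)
    (hKB : @Semireflexive (K ⊗[R] A) (K ⊗[R] B) inferInstance inferInstance
      (Module.compHom (K ⊗[R] B)
        (Algebra.TensorProduct.map (AlgHom.id R K)
          (IsScalarTower.toAlgHom R A B)).toRingHom)) :
    Semireflexive R B :=
  stmt3_general R K A B hA hBflat hBfin hKB
end

section
/- Let R be a commutative ring, let A be a commutative R-algebra that is semireflexive as an R-module, and let B be an A-module that is semireflexive as an A-module. Then B, viewed as an R-module by restriction of scalars, is semireflexive as an R-module. -/
/-- Let `R` be a commutative ring, let `A` be a commutative `R`-algebra that is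
semireflexive as an `R`-module, and let `B` be an `A`-module that is semireflexive as an
`A`-module.  Then `B`, viewed as an `R`-module by restriction of scalars, is semireflexive
as an `R`-module. -/
theorem stmt4 (R : Type*) [CommRing R] (A : Type*) [CommRing A] [Algebra R A]
    (B : Type*) [AddCommGroup B] [Module A B] [Module R B] [IsScalarTower R A B]
    (hA : Semireflexive R A) (hB : Semireflexive A B) :
    Semireflexive R B := by
  have key : ∀ b : B, b ≠ 0 → ∃ f : B →ₗ[R] R, f b ≠ 0 := by
    intro b hb
    obtain ⟨g, hg⟩ : ∃ g : B →ₗ[A] A, g b ≠ 0 := by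
      by_contra h
      push_neg at h
      apply hb
      apply hB
      rw [map_zero]
      ext g
      simpa using h g
    obtain ⟨h, hh⟩ : ∃ h : A →ₗ[R] R, h (g b) ≠ 0 := by
      by_contra hc
      push_neg at hc
      apply hg
      apply hA
      rw [map_zero]
      ext f
      simpa using hc f
    exact ⟨h ∘ₗ (g.restrictScalars R), hh⟩
  rw [Semireflexive, injective_iff_map_eq_zero]
  intro b hb
  by_contra hb0
  obtain ⟨f, hf⟩ := key b hb0
  apply hf
  have := congrArg (fun φ => φ f) hb
  simpa using this
end
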